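/- In A = ℂ[x¹,x²,x³], fix ν, a, b ∈ ℝ, let L₁₃ := x¹·∂₃ + b·∂₁ and L₂₃ := a·x²·∂₃ + b·∂₂ (derivations of A), and define the star product α⋆β := Σ_{n≥0} ((−iν)ⁿ/n!)·L₁₃ⁿ(α)·L₂₃ⁿ(β), a finite sum since L₂₃ is locally nilpotent on polynomials. Then: (i) x¹⋆x² = x¹x² − iν·b²; (ii) x¹⋆x³ = x¹x³ − iν·a·b·x²; (iii) x³⋆x² = x²x³ − iν·b·x¹; (iv) x³⋆x³ = (x³)² − iν·a·x¹x² − (a·b²·ν²)/2; and (v) for every c ∈ ℝ the polynomial f_c := (1/2)((x¹)² + a(x²)²) − b·x³ − c is ⋆-central and undeformed: α⋆f_c = α·f_c = f_c⋆α for all α ∈ A. -/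
import Mathlib


open MvPolynomial
open scoped BigOperators

namespace EllipticParaboloidStar

/-- `L₁₃ := x¹·∂₃ + b·∂₁` as a derivation of `ℂ[x¹,x²,x³]`. -/
noncomputable def L13 (b : ℝ) :
    Derivation ℂ (MvPolynomial (Fin 3) ℂ) (MvPolynomial (Fin 3) ℂ) :=
  (X 0 : MvPolynomial (Fin 3) ℂ) • pderiv 2
    + (C (b : ℂ) : MvPolynomial (Fin 3) ℂ) • pderiv 0

/-- `L₂₃ := a·x²·∂₃ + b·∂₂` as a derivation of `ℂ[x¹,x²,x³]`. -/
noncomputable def L23 (a b : ℝ) :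
    Derivation ℂ (MvPolynomial (Fin 3) ℂ) (MvPolynomial (Fin 3) ℂ) :=
  ((C (a : ℂ) * X 1 : MvPolynomial (Fin 3) ℂ)) • pderiv 2
    + (C (b : ℂ) : MvPolynomial (Fin 3) ℂ) • pderiv 1

/-- The abelian-twist star product
`α ⋆ β := Σ_{n≥0} ((−iν)ⁿ/n!)·L₁₃ⁿ(α)·L₂₃ⁿ(β)` (a finite sum). -/
noncomputable def star (ν a b : ℝ) (α β : MvPolynomial (Fin 3) ℂ) :
    MvPolynomial (Fin 3) ℂ :=
  ∑ᶠ n : ℕ, (((-(Complex.I * ν)) ^ n / n.factorial : ℂ)) •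
    (((L13 b).toLinearMap ^ n) α * ((L23 a b).toLinearMap ^ n) β)

/-- The elliptic paraboloid `f_c := (1/2)((x¹)² + a(x²)²) − b·x³ − c`. -/
noncomputable def fc (a b c : ℝ) : MvPolynomial (Fin 3) ℂ :=
  C (1 / 2 : ℂ) * ((X 0) ^ 2 + C (a : ℂ) * (X 1) ^ 2) - C (b : ℂ) * X 2 - C (c : ℂ)

lemma L13_apply (b : ℝ) (p : MvPolynomial (Fin 3) ℂ) :
    L13 b p = X 0 * pderiv 2 p + C (b : ℂ) * pderiv 0 p := by
  simp [L13, Derivation.add_apply, Derivation.smul_apply, smul_eq_mul]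

lemma L23_apply (a b : ℝ) (p : MvPolynomial (Fin 3) ℂ) :
    L23 a b p = C (a : ℂ) * X 1 * pderiv 2 p + C (b : ℂ) * pderiv 1 p := by
  simp [L23, Derivation.add_apply, Derivation.smul_apply, smul_eq_mul]

@[simp] lemma L13_X0 (b : ℝ) : L13 b (X 0) = C (b : ℂ) := by
  simp [L13_apply, pderiv_X, Pi.single_apply]

@[simp] lemma L13_X1 (b : ℝ) : L13 b (X 1) = 0 := by
  simp [L13_apply, pderiv_X, Pi.single_apply]

@[simp] lemma L13_X2 (b : ℝ) : L13 b (X 2) = X 0 := by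
  simp [L13_apply, pderiv_X, Pi.single_apply]

@[simp] lemma L13_C (b : ℝ) (z : ℂ) : L13 b (C z) = 0 := by
  simp [L13_apply]

@[simp] lemma L23_X0 (a b : ℝ) : L23 a b (X 0) = 0 := by
  simp [L23_apply, pderiv_X, Pi.single_apply]

@[simp] lemma L23_X1 (a b : ℝ) : L23 a b (X 1) = C (b : ℂ) := by
  simp [L23_apply, pderiv_X, Pi.single_apply]

@[simp] lemma L23_X2 (a b : ℝ) : L23 a b (X 2) = C (a : ℂ) * X 1 := by
  simp [L23_apply, pderiv_X, Pi.single_apply]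

@[simp] lemma L23_C (a b : ℝ) (z : ℂ) : L23 a b (C z) = 0 := by
  simp [L23_apply]

@[simp] lemma L13_fc (a b c : ℝ) : L13 b (fc a b c) = 0 := by
  rw [L13_apply]
  simp only [fc, map_sub, map_add, map_mul, pderiv_C, pderiv_X, Pi.single_apply]
  norm_num [pderiv_pow, pderiv_X, Pi.single_apply, Fin.ext_iff]
  have h2 : (C (1/2:ℂ) : MvPolynomial (Fin 3) ℂ) * 2 = 1 := by
    rw [← map_ofNat (C : ℂ →+* MvPolynomial (Fin 3) ℂ) 2, ← C_mul]; norm_num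
  linear_combination (X 0 * C (b:ℂ)) * h2

@[simp] lemma L23_fc (a b c : ℝ) : L23 a b (fc a b c) = 0 := by
  rw [L23_apply]
  simp only [fc, map_sub, map_add, map_mul, pderiv_C, pderiv_X, Pi.single_apply]
  norm_num [pderiv_pow, pderiv_X, Pi.single_apply, Fin.ext_iff]
  have h2 : (C (1/2:ℂ) : MvPolynomial (Fin 3) ℂ) * 2 = 1 := by
    rw [← map_ofNat (C : ℂ →+* MvPolynomial (Fin 3) ℂ) 2, ← C_mul]; norm_num
  linear_combination (C (a:ℂ) * X 1 * C (b:ℂ)) * h2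

lemma pow_apply_zero {M : Type*} [AddCommGroup M] [Module ℂ M]
    {D : Module.End ℂ M} {β : M} {N : ℕ} (h : (D ^ N) β = 0) {n : ℕ} (hn : N ≤ n) :
    (D ^ n) β = 0 := by
  obtain ⟨k, rfl⟩ := Nat.exists_eq_add_of_le hn
  rw [add_comm, pow_add, Module.End.mul_apply, h, map_zero]

lemma star_eq_right (ν a b : ℝ) (α β : MvPolynomial (Fin 3) ℂ) (N : ℕ)
    (h : (((L23 a b).toLinearMap) ^ N) β = 0) :
    star ν a b α β = ∑ n ∈ Finset.range N, (((-(Complex.I * ν)) ^ n / n.factorial : ℂ)) •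
      (((L13 b).toLinearMap ^ n) α * ((L23 a b).toLinearMap ^ n) β) := by
  apply finsum_eq_finset_sum_of_support_subset
  intro n hn
  simp only [Function.mem_support, ne_eq, Finset.coe_range, Set.mem_Iio] at hn ⊢
  by_contra hlt
  push_neg at hlt
  exact hn (by rw [pow_apply_zero h hlt, mul_zero, smul_zero])

lemma star_eq_left (ν a b : ℝ) (α β : MvPolynomial (Fin 3) ℂ) (N : ℕ)
    (h : (((L13 b).toLinearMap) ^ N) α = 0) :
    star ν a b α β = ∑ n ∈ Finset.range N, (((-(Complex.I * ν)) ^ n / n.factorial : ℂ)) •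
      (((L13 b).toLinearMap ^ n) α * ((L23 a b).toLinearMap ^ n) β) := by
  apply finsum_eq_finset_sum_of_support_subset
  intro n hn
  simp only [Function.mem_support, ne_eq, Finset.coe_range, Set.mem_Iio] at hn ⊢
  by_contra hlt
  push_neg at hlt
  exact hn (by rw [pow_apply_zero h hlt, zero_mul, smul_zero])

lemma toLin (b:ℝ) (p) : (L13 b).toLinearMap p = L13 b p := rfl
lemma toLin' (a b:ℝ) (p) : (L23 a b).toLinearMap p = L23 a b p := rfl

end EllipticParaboloidStar

open EllipticParaboloidStar in
/-- Star products of coordinates for the twisted elliptic paraboloids: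
(i) `x¹⋆x² = x¹x² − iν·b²`; (ii) `x¹⋆x³ = x¹x³ − iν·a·b·x²`;
(iii) `x³⋆x² = x²x³ − iν·b·x¹`;
(iv) `x³⋆x³ = (x³)² − iν·a·x¹x² − a·b²·ν²/2`;
and (v) each `f_c` is ⋆-central and undeformed. -/
theorem statement18 (ν a b : ℝ) :
    (EllipticParaboloidStar.star ν a b (X 0) (X 1)
        = X 0 * X 1 - C (Complex.I * ν * b ^ 2)) ∧
    (EllipticParaboloidStar.star ν a b (X 0) (X 2)
        = X 0 * X 2 - C (Complex.I * ν * a * b) * X 1) ∧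
    (EllipticParaboloidStar.star ν a b (X 2) (X 1)
        = X 1 * X 2 - C (Complex.I * ν * b) * X 0) ∧
    (EllipticParaboloidStar.star ν a b (X 2) (X 2)
        = (X 2) ^ 2 - C (Complex.I * ν * a) * (X 0 * X 1)
          - C ((a * b ^ 2 * ν ^ 2) / 2 : ℂ)) ∧
    (∀ c : ℝ, ∀ α : MvPolynomial (Fin 3) ℂ,
      EllipticParaboloidStar.star ν a b α (fc a b c) = α * fc a b c ∧
      EllipticParaboloidStar.star ν a b (fc a b c) α = fc a b c * α) := by
  refine ⟨?_, ?_, ?_, ?_, ?_⟩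
  · rw [star_eq_right ν a b _ _ 2
      (by simp [pow_succ, Module.End.mul_apply, toLin', L23_X1, L23_C])]
    simp [Finset.sum_range_succ, pow_succ, Module.End.mul_apply, toLin, toLin',
      smul_eq_C_mul, C_mul, C_pow]
    ring
  · rw [star_eq_right ν a b _ _ 3
      (by simp [pow_succ, Module.End.mul_apply, toLin', smul_eq_C_mul])]
    simp [Finset.sum_range_succ, pow_succ, Module.End.mul_apply, toLin, toLin',
      smul_eq_C_mul, C_mul, C_pow]
    ring
  · rw [star_eq_right ν a b _ _ 2
      (by simp [pow_succ, Module.End.mul_apply, toLin'])]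
    simp [Finset.sum_range_succ, pow_succ, Module.End.mul_apply, toLin, toLin',
      smul_eq_C_mul, C_mul, C_pow]
    ring
  · rw [star_eq_right ν a b _ _ 3
      (by simp [pow_succ, Module.End.mul_apply, toLin', smul_eq_C_mul])]
    simp [Finset.sum_range_succ, pow_succ, Module.End.mul_apply, toLin, toLin',
      smul_eq_C_mul, C_mul, C_pow]
    rw [show (Complex.I * (ν:ℂ) * (Complex.I * ν) / 2) = -((ν:ℂ) ^ 2 * (1 / 2)) by
      linear_combination ((ν:ℂ) ^ 2 / 2) * Complex.I_sq,
      show ((a:ℂ) * (b * b) * (ν * ν) / 2) = (a:ℂ) * b ^ 2 * ((ν:ℂ) ^ 2 * (1 / 2)) by ring]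
    simp only [map_neg, C_mul, C_pow]
    ring
  · intro c α
    constructor
    · rw [star_eq_right ν a b _ _ 1 (by simp [toLin', L23_fc])]
      simp
    · rw [star_eq_left ν a b _ _ 1 (by simp [toLin, L13_fc])]
      simp
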